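/- arXiv:2603.20097 — 2 statements merged into one kernel-verified Lean document; each statement's English description precedes it below -/
import Mathlib

section
/- Let n, L be natural numbers and r : Fin n → Bool a team's game results (true = win), and suppose the team's total losses over the season are at least L + 1. Let T be the least natural number t ≤ n such that the cumulative losses through the first t games equal L + 1 (the REWIND date). Then: (a) every r' : Fin n → Bool that agrees with r on all games g with (g : ℕ) < T has total wins at most n - (L + 1); and (b) for every t < T, the sequence that agrees with r on games g with (g : ℕ) < t and assigns true to all other games has total wins at least n - L. -/
/-- Total wins over a season of `n` games with results `r` (`true` = win). -/
def totalWins (n : ℕ) (r : Fin n → Bool) : ℕ :=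
  (Finset.univ.filter (fun g : Fin n => r g = true)).card

/-- Cumulative losses through the first `t` games. -/
def lossesThrough (n : ℕ) (r : Fin n → Bool) (t : ℕ) : ℕ :=
  (Finset.univ.filter (fun g : Fin n => (g : ℕ) < t ∧ r g = false)).card

lemma lossesThrough_eq_full (n : ℕ) (r : Fin n → Bool) :
    lossesThrough n r n = (Finset.univ.filter (fun g : Fin n => r g = false)).card := by
  unfold lossesThrough
  congr 1
  apply Finset.filter_congr
  intro g _
  simp [g.isLt]

lemma wins_add_losses (n : ℕ) (r : Fin n → Bool) :
    totalWins n r + lossesThrough n r n = n := by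
  rw [lossesThrough_eq_full]
  unfold totalWins
  have := Finset.card_filter_add_card_filter_not (s := (Finset.univ : Finset (Fin n)))
    (p := fun g : Fin n => r g = true)
  simpa using this

lemma lossesThrough_mono (n : ℕ) (r : Fin n → Bool) {s t : ℕ} (h : s ≤ t) :
    lossesThrough n r s ≤ lossesThrough n r t := by
  apply Finset.card_le_card
  intro g hg
  simp only [Finset.mem_filter, Finset.mem_univ, true_and] at *
  exact ⟨hg.1.trans_le h, hg.2⟩

lemma lossesThrough_step (n : ℕ) (r : Fin n → Bool) (t : ℕ) :
    lossesThrough n r (t + 1) ≤ lossesThrough n r t + 1 := by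
  unfold lossesThrough
  have hsub : (Finset.univ.filter (fun g : Fin n => (g : ℕ) < t + 1 ∧ r g = false)) ⊆
      (Finset.univ.filter (fun g : Fin n => (g : ℕ) < t ∧ r g = false)) ∪
      (Finset.univ.filter (fun g : Fin n => (g : ℕ) = t)) := by
    intro g hg
    simp only [Finset.mem_filter, Finset.mem_union, Finset.mem_univ, true_and] at *
    rcases hg with ⟨hlt, hf⟩
    rcases Nat.lt_succ_iff_lt_or_eq.mp hlt with h | h
    · exact Or.inl ⟨h, hf⟩
    · exact Or.inr h
  calc (Finset.univ.filter (fun g : Fin n => (g : ℕ) < t + 1 ∧ r g = false)).card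
      ≤ _ := Finset.card_le_card hsub
    _ ≤ _ + _ := Finset.card_union_le _ _
    _ ≤ _ + 1 := by
        gcongr
        apply Finset.card_le_one.mpr
        intro a ha b hb
        simp only [Finset.mem_filter, Finset.mem_univ, true_and] at ha hb
        exact Fin.ext (ha.trans hb.symm)

lemma key_le (n L : ℕ) (r : Fin n → Bool) (T : ℕ)
    (hT : IsLeast {t : ℕ | t ≤ n ∧ lossesThrough n r t = L + 1} T)
    {t : ℕ} (ht : t < T) : lossesThrough n r t ≤ L := by
  by_contra h
  push_neg at h
  have hex : ∃ t₀, L + 1 ≤ lossesThrough n r t₀ := ⟨t, h⟩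
  set t₀ := Nat.find hex with ht₀def
  have ht₀ : L + 1 ≤ lossesThrough n r t₀ := Nat.find_spec hex
  have ht₀le : t₀ ≤ t := Nat.find_le h
  have h0 : lossesThrough n r 0 = 0 := by simp [lossesThrough]
  have hpos : 0 < t₀ := by
    rcases Nat.eq_zero_or_pos t₀ with h' | h'
    · rw [h'] at ht₀; omega
    · exact h'
  have hprev : ¬ L + 1 ≤ lossesThrough n r (t₀ - 1) :=
    Nat.find_min hex (Nat.sub_lt hpos one_pos)
  have hstep := lossesThrough_step n r (t₀ - 1)
  have heq : t₀ - 1 + 1 = t₀ := Nat.succ_pred_eq_of_pos hpos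
  rw [heq] at hstep
  have hval : lossesThrough n r t₀ = L + 1 := by omega
  have hTn : T ≤ n := hT.1.1
  have : T ≤ t₀ := hT.2 ⟨by omega, hval⟩
  omega

/-- Let `T` be the least `t ≤ n` with exactly `L + 1` cumulative losses through
the first `t` games (the REWIND date, which exists since total losses are at
least `L + 1`).  Then (a) any season agreeing with `r` before `T` has at most
`n - (L + 1)` total wins, and (b) for every `t < T`, agreeing with `r` before
`t` and winning out thereafter yields at least `n - L` total wins. -/
theorem stmt_2 (n L : ℕ) (r : Fin n → Bool)
    (hlosses : L + 1 ≤ lossesThrough n r n) (T : ℕ)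
    (hT : IsLeast {t : ℕ | t ≤ n ∧ lossesThrough n r t = L + 1} T) :
    (∀ r' : Fin n → Bool, (∀ g : Fin n, (g : ℕ) < T → r' g = r g) →
        totalWins n r' ≤ n - (L + 1)) ∧
    (∀ t < T, n - L ≤ totalWins n (fun g => if (g : ℕ) < t then r g else true)) := by
  constructor
  · intro r' hagree
    have hT' : lossesThrough n r' T = L + 1 := by
      rw [← hT.1.2]
      unfold lossesThrough
      congr 1
      apply Finset.filter_congr
      intro g _
      constructor
      · rintro ⟨h1, h2⟩
        exact ⟨h1, (hagree g h1) ▸ h2⟩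
      · rintro ⟨h1, h2⟩
        exact ⟨h1, (hagree g h1).trans h2⟩
    have hmono : L + 1 ≤ lossesThrough n r' n := hT' ▸ lossesThrough_mono n r' hT.1.1
    have hw := wins_add_losses n r'
    omega
  · intro t ht
    have hle : lossesThrough n r t ≤ L := key_le n L r T hT ht
    have hlosses_s :
        lossesThrough n (fun g : Fin n => if (g : ℕ) < t then r g else true) n
          = lossesThrough n r t := by
      unfold lossesThrough
      congr 1
      apply Finset.filter_congr
      intro g _
      simp only
      constructor
      · rintro ⟨_, h2⟩
        by_cases hc : (g : ℕ) < t
        · simp only [hc, if_true] at h2; exact ⟨hc, h2⟩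
        · simp [hc] at h2
      · rintro ⟨h1, h2⟩
        exact ⟨g.isLt, by simp [h1, h2]⟩
    have hw := wins_add_losses n (fun g : Fin n => if (g : ℕ) < t then r g else true)
    omega
end

section
/- Let n, L be natural numbers, let r_i, r_j : Fin n → Bool with team j's total wins equal to n - L, and suppose team i's total losses are at least L + 1. Let T_ex be the least t ≤ n such that team i's cumulative losses through the first t games are at least L + 1 (the ex post elimination date), and suppose there exists t ≤ n with team i's cumulative losses through t plus team j's cumulative wins through t exceeding n; let T_gold be the least such t (the simple mathematical-elimination date relative to j). Then T_ex ≤ T_gold. -/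
/-- Cumulative wins through the first `t` games. -/
def winsThrough (n : ℕ) (r : Fin n → Bool) (t : ℕ) : ℕ :=
  (Finset.univ.filter (fun g : Fin n => (g : ℕ) < t ∧ r g = true)).card

/-- Suppose team `j` finishes with `n - L` wins and team `i` has at least
`L + 1` total losses.  Let `T_ex` be the least `t ≤ n` at which team `i` has
accrued at least `L + 1` losses (the ex post elimination / REWIND date), and
let `T_gold` be the least `t ≤ n` at which team `i`'s cumulative losses plus
team `j`'s cumulative wins exceed `n` (the simple mathematical-elimination
date relative to `j`, assumed to exist).  Then `T_ex ≤ T_gold`. -/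
theorem stmt_4 (n L : ℕ) (r_i r_j : Fin n → Bool)
    (hj : totalWins n r_j = n - L)
    (hi : L + 1 ≤ lossesThrough n r_i n)
    (T_ex T_gold : ℕ)
    (hTex : IsLeast {t : ℕ | t ≤ n ∧ L + 1 ≤ lossesThrough n r_i t} T_ex)
    (hTgold : IsLeast {t : ℕ | t ≤ n ∧ n < lossesThrough n r_i t + winsThrough n r_j t} T_gold) :
    T_ex ≤ T_gold := by
  obtain ⟨⟨hgn, hgt⟩, -⟩ := hTgold
  -- winsThrough ≤ totalWins
  have hw : winsThrough n r_j T_gold ≤ totalWins n r_j := by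
    apply Finset.card_le_card
    intro g hg
    simp only [Finset.mem_filter] at *
    exact ⟨hg.1, hg.2.2⟩
  -- lossesThrough ≤ n
  have hln : lossesThrough n r_i n ≤ n := by
    have := Finset.card_filter_le (Finset.univ : Finset (Fin n))
      (fun g : Fin n => (g : ℕ) < n ∧ r_i g = false)
    simpa [lossesThrough] using this
  have hLn : L < n := lt_of_lt_of_le (Nat.lt_of_succ_le hi) hln
  have hkey : L + 1 ≤ lossesThrough n r_i T_gold := by
    have h2 : n < lossesThrough n r_i T_gold + (n - L) :=
      lt_of_lt_of_le hgt (Nat.add_le_add_left (hj ▸ hw) _)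
    omega
  exact hTex.2 ⟨hgn, hkey⟩
end
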